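/- Fix 1 ≤ i ≤ s. Let f_{i−1} ∈ ℂ[x,y] be a nonzero polynomial with ϑ_{ι_i}(f_{i−1}) = γ_i^{(i)}. Let a, b ∈ ℂ[[x,y]] be nonzero with ϑ_{ι_i}(a) and ϑ_{ι_i}(b) finite and belonging to Γ_{i−1}(λ_1, …, λ_i), and let α, β ∈ ℕ_0. If ϑ_{ι_i}(a·f_{i−1}^α) = ϑ_{ι_i}(b·f_{i−1}^β), then α − β is an integer multiple of k_i. -/

import Mathlib

/-!
Since `y_i(0) = 0`, the pullback along `ι_i` is the genuine substitution `x ↦ t^{e_i}, y ↦ y_i(t)`,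
a ring homomorphism, so `t`-orders add and the hypothesis becomes
`q_a + α γ_i = q_b + β γ_i`. Dividing by `e_i`, every element of `Γ_{i-1}` lies in `M_{i-1}` and
`γ_i / e_i ≡ λ_i` modulo `M_{i-1}`; hence `(α - β) λ_i ∈ M_{i-1}`, and `k_i`, the order of `λ_i` in
`ℚ ⧸ M_{i-1}`, divides `α - β`.
-/

noncomputable def psOrdQ (f : PowerSeries ℂ) : WithTop ℚ :=
  WithTop.map (fun m : ℕ => (m : ℚ)) f.order

/-- Substitution x ↦ t^e on power series (for e ≥ 1). -/
noncomputable def expandPS (e : ℕ) (f : PowerSeries ℂ) : PowerSeries ℂ :=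
  PowerSeries.mk fun n => if e ∣ n then PowerSeries.coeff (n / e) f else 0

/-- Truncated parametrization pullback on ℂ[[x]][y]: x ↦ t^e, y ↦ yi. -/
noncomputable def iotaPS (e : ℕ) (yi : PowerSeries ℂ) (g : Polynomial (PowerSeries ℂ)) :
    PowerSeries ℂ :=
  ∑ ℓ ∈ g.support, expandPS e (g.coeff ℓ) * yi ^ ℓ

/-- Parametrization pullback on ℂ[[x,y]]: x ↦ t^k, y ↦ Y (for k ≥ 1 and Y of positive
order; the coefficient of t^m only receives contributions from monomials x^a y^b with
a, b ≤ m). -/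
noncomputable def iotaMv (k : ℕ) (Y : PowerSeries ℂ) (G : MvPowerSeries (Fin 2) ℂ) :
    PowerSeries ℂ :=
  PowerSeries.mk fun m =>
    ∑ p ∈ Finset.range (m + 1) ×ˢ Finset.range (m + 1),
      if k * p.1 ≤ m then
        MvPowerSeries.coeff (Finsupp.single (0 : Fin 2) p.1 + Finsupp.single (1 : Fin 2) p.2)
            G *
          PowerSeries.coeff (m - k * p.1) (Y ^ p.2)
      else 0

section Substitution

open PowerSeries

noncomputable def prodEquivFinsuppFinTwo : ℕ × ℕ ≃ (Fin 2 →₀ ℕ) :=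
  (finTwoArrowEquiv ℕ).symm.trans Finsupp.equivFunOnFinite.symm

theorem prodEquivFinsuppFinTwo_apply (p : ℕ × ℕ) :
    prodEquivFinsuppFinTwo p = Finsupp.single 0 p.1 + Finsupp.single 1 p.2 := by
  ext i; fin_cases i <;> simp [prodEquivFinsuppFinTwo]

theorem coeff_X_pow_mul_pow_eq_zero {R : Type*} [CommSemiring R] {Y : PowerSeries R}
    (hY : constantCoeff Y = 0) {m a b : ℕ} (h : m < a ∨ m < b) : coeff m (X ^ a * Y ^ b) = 0 := by
  rcases h with h | h
  · rw [coeff_X_pow_mul', if_neg (by omega)]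
  · refine X_pow_dvd_iff.mp (dvd_mul_of_dvd_right ?_ _) m h
    exact pow_dvd_pow_of_dvd (X_dvd_iff.mpr hY) b

theorem hasSubst_X_pow_pair {R : Type*} [CommRing R] {k : ℕ} (hk : k ≠ 0) {Y : PowerSeries R}
    (hY : constantCoeff Y = 0) : MvPowerSeries.HasSubst ![(X : PowerSeries R) ^ k, Y] :=
  MvPowerSeries.hasSubst_of_constantCoeff_zero fun s => by
    fin_cases s
    · simp [← constantCoeff_eq, hk]
    · simpa [← constantCoeff_eq] using hY

theorem iotaMv_eq_subst {k : ℕ} (hk : k ≠ 0) {Y : PowerSeries ℂ} (hY : constantCoeff Y = 0)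
    (G : MvPowerSeries (Fin 2) ℂ) :
    iotaMv k Y G = MvPowerSeries.subst ![X ^ k, Y] G := by
  have hmonomial (p : ℕ × ℕ) :
      ((prodEquivFinsuppFinTwo p).prod fun s e => ![(X : PowerSeries ℂ) ^ k, Y] s ^ e) =
        X ^ (k * p.1) * Y ^ p.2 := by
    rw [Finsupp.prod_fintype _ _ (by simp), Fin.prod_univ_two, pow_mul]
    simp [prodEquivFinsuppFinTwo]
  ext m
  rw [iotaMv, coeff_mk, ← coeff_coeToMvPowerSeries,
    MvPowerSeries.coeff_subst (hasSubst_X_pow_pair hk hY),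
    ← finsum_comp_equiv prodEquivFinsuppFinTwo,
    finsum_eq_sum_of_support_subset _ (s := Finset.range (m + 1) ×ˢ Finset.range (m + 1))]
  · refine Finset.sum_congr rfl fun p _ => ?_
    rw [hmonomial, coeff_coeToMvPowerSeries, coeff_X_pow_mul', prodEquivFinsuppFinTwo_apply,
      smul_eq_mul]
    split_ifs <;> simp
  · intro p hp
    by_contra hpm
    simp only [Finset.coe_product, Finset.coe_range, Set.mem_prod, Set.mem_Iio, not_and_or,
      not_lt] at hpm
    refine hp ?_
    have : m < k * p.1 ∨ m < p.2 := by
      rcases hpm with h | h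
      · exact .inl (lt_of_lt_of_le h (Nat.le_mul_of_pos_left _ (Nat.pos_of_ne_zero hk)))
      · omega
    simp only [hmonomial, coeff_coeToMvPowerSeries, coeff_X_pow_mul_pow_eq_zero hY this, smul_zero]

theorem iotaMv_mul {k : ℕ} (hk : k ≠ 0) {Y : PowerSeries ℂ} (hY : constantCoeff Y = 0)
    (G H : MvPowerSeries (Fin 2) ℂ) : iotaMv k Y (G * H) = iotaMv k Y G * iotaMv k Y H := by
  simp only [iotaMv_eq_subst hk hY, MvPowerSeries.subst_mul (hasSubst_X_pow_pair hk hY)]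

theorem iotaMv_pow {k : ℕ} (hk : k ≠ 0) {Y : PowerSeries ℂ} (hY : constantCoeff Y = 0)
    (G : MvPowerSeries (Fin 2) ℂ) (n : ℕ) : iotaMv k Y (G ^ n) = iotaMv k Y G ^ n := by
  simp only [iotaMv_eq_subst hk hY, MvPowerSeries.subst_pow (hasSubst_X_pow_pair hk hY)]

theorem psOrdQ_mul_pow (f g : PowerSeries ℂ) (n : ℕ) :
    psOrdQ (f * g ^ n) = psOrdQ f + n • psOrdQ g := by
  simp only [psOrdQ, order_mul, order_pow]
  exact (map_add (Nat.castAddMonoidHom ℚ).withTopMap _ _).trans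
    (congrArg _ (map_nsmul (Nat.castAddMonoidHom ℚ).withTopMap _ _))

theorem add_mul_eq_of_order_iotaMv_eq {k : ℕ} (hk : k ≠ 0) {Y : PowerSeries ℂ}
    (hY : constantCoeff Y = 0) {a b F : MvPowerSeries (Fin 2) ℂ} {qa qb g : ℚ}
    (ha : psOrdQ (iotaMv k Y a) = qa) (hb : psOrdQ (iotaMv k Y b) = qb)
    (hF : psOrdQ (iotaMv k Y F) = g) {α β : ℕ}
    (h : (iotaMv k Y (a * F ^ α)).order = (iotaMv k Y (b * F ^ β)).order) :
    qa + α * g = qb + β * g := by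
  have hQ : psOrdQ (iotaMv k Y (a * F ^ α)) = psOrdQ (iotaMv k Y (b * F ^ β)) := by
    simp only [psOrdQ, h]
  simp only [iotaMv_mul hk hY, iotaMv_pow hk hY, psOrdQ_mul_pow, ha, hb, hF] at hQ
  exact_mod_cast hQ

end Substitution


section Subgroup

variable {K : Type*} [Field K] (H : AddSubgroup K)

theorem inv_mul_sub_mem_of_recursion {c : K} (hc : c ≠ 0) {lam g : ℕ → K} {kk : ℕ → ℕ} {n : ℕ}
    (hlam : ∀ ℓ, 1 ≤ ℓ → ℓ < n → lam ℓ ∈ H) (hg1 : g 1 = c * lam 1)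
    (hg : ∀ ℓ, 1 ≤ ℓ → ℓ < n → g (ℓ + 1) = kk ℓ * g ℓ - c * lam ℓ + c * lam (ℓ + 1)) :
    ∀ ℓ, 1 ≤ ℓ → ℓ ≤ n → c⁻¹ * g ℓ - lam ℓ ∈ H := by
  intro ℓ hℓ
  induction ℓ, hℓ using Nat.le_induction with
  | base => intro; simp [hg1, hc]
  | succ ℓ hℓ ih =>
    intro hℓn
    have hrec : c⁻¹ * g (ℓ + 1) - lam (ℓ + 1) =
        kk ℓ • (c⁻¹ * g ℓ - lam ℓ) + (kk ℓ - 1 : ℤ) • lam ℓ := by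
      rw [hg ℓ hℓ hℓn, nsmul_eq_mul, zsmul_eq_mul]
      field_simp
      push_cast
      ring
    rw [hrec]
    exact add_mem (nsmul_mem (ih (by omega)) _) (zsmul_mem (hlam ℓ hℓ hℓn) _)

theorem inv_mul_mem_of_mem_closure {c : K} (hc : c ≠ 0) (h1 : (1 : K) ∈ H) {g : ℕ → K}
    {T : Set ℕ} (hg : ∀ ℓ ∈ T, c⁻¹ * g ℓ ∈ H) {q : K}
    (hq : q ∈ AddSubmonoid.closure ({c} ∪ g '' T)) : c⁻¹ * q ∈ H := by
  refine (AddSubmonoid.closure_le (S := H.toAddSubmonoid.comap (AddMonoidHom.mulLeft c⁻¹))).mpr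
    ?_ hq
  rintro x (rfl | ⟨ℓ, hℓ, rfl⟩)
  · simpa [hc] using h1
  · exact hg ℓ hℓ

theorem sub_zsmul_mem_of_add_mul_eq {c g x qa qb : K} (hqa : c⁻¹ * qa ∈ H) (hqb : c⁻¹ * qb ∈ H)
    (hg : c⁻¹ * g - x ∈ H) {α β : ℕ} (h : qa + α * g = qb + β * g) :
    ((α : ℤ) - β) • x ∈ H := by
  have hx : ((α : ℤ) - β) • x = (c⁻¹ * qb - c⁻¹ * qa) - ((α : ℤ) - β) • (c⁻¹ * g - x) := by
    simp only [zsmul_eq_mul]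
    push_cast
    linear_combination c⁻¹ * h
  rw [hx]
  exact sub_mem (sub_mem hqb hqa) (zsmul_mem hg _)

end Subgroup

theorem AddSubgroup.natCast_dvd_of_zsmul_mem {G : Type*} [AddCommGroup G] {H : AddSubgroup G}
    {x : G} {k : ℕ} (hk : IsLeast {m : ℕ | 0 < m ∧ m • x ∈ H} k) {n : ℤ} (hn : n • x ∈ H) :
    (k : ℤ) ∣ n := by
  have hord : addOrderOf (x : G ⧸ H) = k := by
    rw [addOrderOf_eq_iff hk.1.1, ← QuotientAddGroup.mk_nsmul, QuotientAddGroup.eq_zero_iff]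
    refine ⟨hk.1.2, fun m hmk hm hmx => ?_⟩
    rw [← QuotientAddGroup.mk_nsmul, QuotientAddGroup.eq_zero_iff] at hmx
    exact absurd (hk.2 ⟨hm, hmx⟩) (not_le.mpr hmk)
  rwa [← hord, addOrderOf_dvd_iff_zsmul_eq_zero, ← QuotientAddGroup.mk_zsmul,
    QuotientAddGroup.eq_zero_iff]

theorem pos_of_eq_mul_pred {e kk : ℕ → ℕ} {s : ℕ} (he0 : e 0 = 1)
    (he : ∀ i, 1 ≤ i → i ≤ s → e i = kk i * e (i - 1)) (hkk : ∀ i, 1 ≤ i → i ≤ s → 0 < kk i) :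
    ∀ j ≤ s, 0 < e j := by
  intro j
  induction j with
  | zero => simp [he0]
  | succ j ih =>
    intro hj
    rw [he (j + 1) (by omega) hj]
    exact Nat.mul_pos (hkk _ (by omega) hj) (ih (by omega))

theorem dvd_of_eq_mul_pred {e kk : ℕ → ℕ} {s : ℕ}
    (he : ∀ i, 1 ≤ i → i ≤ s → e i = kk i * e (i - 1)) {i j : ℕ} (hij : i ≤ j) (hjs : j ≤ s) :
    e i ∣ e j := by
  induction j, hij using Nat.le_induction with
  | base => rfl
  | succ j _ ih =>
    rw [he (j + 1) (by omega) hjs]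
    exact Dvd.dvd.mul_left (ih (by omega)) _

theorem Polynomial.coeff_zero_sum_C_mul_X_pow_add {R : Type*} [CommSemiring R] {S : Finset ℕ}
    {c : ℕ → R} {E : ℕ → ℕ} {ψ φ : ℕ → Polynomial R} {n : ℕ} (hn : 0 < n)
    (hE : ∀ ℓ ∈ S, E ℓ ≠ 0) (hψ : ∀ ℓ ∈ S, (ψ ℓ).comp (X ^ n) = φ ℓ)
    (hφ : ∀ ℓ ∈ S, (φ ℓ).coeff 0 = 0) : (∑ ℓ ∈ S, (C (c ℓ) * X ^ E ℓ + ψ ℓ)).coeff 0 = 0 := by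
  rw [finsetSum_coeff]
  refine Finset.sum_eq_zero fun ℓ hℓ => ?_
  have hψ0 : (ψ ℓ).coeff 0 = 0 := by
    rw [← hφ ℓ hℓ, ← hψ ℓ hℓ, ← expand_eq_comp_X_pow, coeff_expand hn, if_pos (dvd_zero n),
      Nat.zero_div]
  simp [coeff_X_pow, (hE ℓ hℓ).symm, hψ0]

theorem stmt_19_general
    (s : ℕ)
    (lam : ℕ → ℚ)
    (M : ℕ → AddSubgroup ℚ)
    (hM : ∀ i, M i = AddSubgroup.closure ({1} ∪ lam '' Set.Icc 1 i))
    (hlamM : ∀ i, 1 ≤ i → i ≤ s → lam i ∉ M (i - 1))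
    (kk : ℕ → ℕ)
    (hkk : ∀ i, 1 ≤ i → i ≤ s →
      IsLeast {m : ℕ | 0 < m ∧ (m : ℚ) * lam i ∈ M (i - 1)} (kk i))
    (e : ℕ → ℕ) (he0 : e 0 = 1)
    (he : ∀ i, 1 ≤ i → i ≤ s → e i = kk i * e (i - 1))
    (gam : ℕ → ℕ → ℚ)
    (hgam1 : ∀ j, 1 ≤ j → j ≤ s → gam j 1 = (e j : ℚ) * lam 1)
    (hgam : ∀ j, 1 ≤ j → j ≤ s → ∀ ℓ, 1 ≤ ℓ → ℓ ≤ j - 1 →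
      gam j (ℓ + 1) = (kk ℓ : ℚ) * gam j ℓ - (e j : ℚ) * lam ℓ + (e j : ℚ) * lam (ℓ + 1))
    (c : ℕ → ℂ)
    (φ : ℕ → Polynomial ℂ)
    (hφ0 : ∀ ℓ, 1 ≤ ℓ → ℓ ≤ s → (φ ℓ).coeff 0 = 0)
    (E : ℕ → ℕ → ℕ)
    (hE : ∀ i, 1 ≤ i → i ≤ s → ∀ ℓ, 1 ≤ ℓ → ℓ ≤ i → (E i ℓ : ℚ) = (e i : ℚ) * lam ℓ)
    (φs : ℕ → ℕ → Polynomial ℂ)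
    (hφs : ∀ i, 1 ≤ i → i ≤ s → ∀ ℓ, 1 ≤ ℓ → ℓ ≤ i →
      (φs i ℓ).comp (Polynomial.X ^ (e s / e i)) = φ ℓ)
    (Y : ℕ → Polynomial ℂ)
    (hY : ∀ i, 1 ≤ i → i ≤ s →
      Y i = ∑ ℓ ∈ Finset.Icc 1 i, (Polynomial.C (c ℓ) * Polynomial.X ^ E i ℓ + φs i ℓ)) :
    ∀ i, 1 ≤ i → i ≤ s →
      ∀ F : MvPowerSeries (Fin 2) ℂ,
        {d : Fin 2 →₀ ℕ | MvPowerSeries.coeff d F ≠ 0}.Finite → F ≠ 0 →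
        psOrdQ (iotaMv (e i) ((Y i : Polynomial ℂ) : PowerSeries ℂ) F) =
          ((gam i i : ℚ) : WithTop ℚ) →
        ∀ a b : MvPowerSeries (Fin 2) ℂ, a ≠ 0 → b ≠ 0 →
        ∀ qa qb : ℚ,
          psOrdQ (iotaMv (e i) ((Y i : Polynomial ℂ) : PowerSeries ℂ) a) = (qa : WithTop ℚ) →
          psOrdQ (iotaMv (e i) ((Y i : Polynomial ℂ) : PowerSeries ℂ) b) = (qb : WithTop ℚ) →
          qa ∈ AddSubmonoid.closure ({(e i : ℚ)} ∪ gam i '' Set.Icc 1 (i - 1)) →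
          qb ∈ AddSubmonoid.closure ({(e i : ℚ)} ∪ gam i '' Set.Icc 1 (i - 1)) →
          ∀ α β : ℕ,
            PowerSeries.order
                (iotaMv (e i) ((Y i : Polynomial ℂ) : PowerSeries ℂ) (a * F ^ α)) =
              PowerSeries.order
                (iotaMv (e i) ((Y i : Polynomial ℂ) : PowerSeries ℂ) (b * F ^ β)) →
            ∃ m : ℤ, (α : ℤ) - (β : ℤ) = m * (kk i : ℤ) := by
  intro i hi1 his F _ _ hF a b _ _ qa qb ha hb hqa hqb α β hord
  have he_pos := pos_of_eq_mul_pred he0 he fun j h1 h2 => (hkk j h1 h2).1.1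
  have hei : (e i : ℚ) ≠ 0 := by exact_mod_cast (he_pos i his).ne'
  have hE0 (ℓ) (hℓ : ℓ ∈ Finset.Icc 1 i) : E i ℓ ≠ 0 := by
    obtain ⟨hℓ1, hℓi⟩ := Finset.mem_Icc.mp hℓ
    intro h0
    have hlam0 : lam ℓ = 0 := by
      simpa [hei, h0] using (hE i hi1 his ℓ hℓ1 hℓi).symm
    exact hlamM ℓ hℓ1 (hℓi.trans his) (hlam0 ▸ zero_mem _)
  have hdiv : 0 < e s / e i :=
    Nat.div_pos (Nat.le_of_dvd (he_pos s le_rfl) (dvd_of_eq_mul_pred he his le_rfl)) (he_pos i his)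
  have hY0 : PowerSeries.constantCoeff (Y i : PowerSeries ℂ) = 0 := by
    rw [Polynomial.constantCoeff_coe, hY i hi1 his]
    refine Polynomial.coeff_zero_sum_C_mul_X_pow_add (φ := φ) hdiv hE0
      (fun ℓ hℓ => ?_) fun ℓ hℓ => ?_
    all_goals obtain ⟨hℓ1, hℓi⟩ := Finset.mem_Icc.mp hℓ
    exacts [hφs i hi1 his ℓ hℓ1 hℓi, hφ0 ℓ hℓ1 (hℓi.trans his)]
  have hval := add_mul_eq_of_order_iotaMv_eq (he_pos i his).ne' hY0 ha hb hF hord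
  have hmem (ℓ) (hℓ : 1 ≤ ℓ) (hℓi : ℓ < i) : lam ℓ ∈ M (i - 1) :=
    hM (i - 1) ▸ AddSubgroup.subset_closure (Or.inr ⟨ℓ, ⟨hℓ, by omega⟩, rfl⟩)
  have hgam_mem := inv_mul_sub_mem_of_recursion (M (i - 1)) hei hmem (hgam1 i hi1 his)
    fun ℓ h1 h2 => hgam i hi1 his ℓ h1 (by omega)
  have hΓ (q) (hq : q ∈ AddSubmonoid.closure ({(e i : ℚ)} ∪ gam i '' Set.Icc 1 (i - 1))) :
      (e i : ℚ)⁻¹ * q ∈ M (i - 1) := by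
    refine inv_mul_mem_of_mem_closure _ hei (hM (i - 1) ▸ AddSubgroup.subset_closure (Or.inl rfl))
      (fun ℓ hℓ => ?_) hq
    obtain ⟨hℓ1, hℓi⟩ := hℓ
    simpa using add_mem (hgam_mem ℓ hℓ1 (by omega)) (hmem ℓ hℓ1 (by omega))
  obtain ⟨m, hm⟩ := AddSubgroup.natCast_dvd_of_zsmul_mem
    (by simpa only [nsmul_eq_mul] using hkk i hi1 his)
    (sub_zsmul_mem_of_add_mul_eq (M (i - 1)) (hΓ qa hqa) (hΓ qb hqb) (hgam_mem i hi1 le_rfl) hval)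
  exact ⟨m, by rw [hm, mul_comm]⟩

theorem stmt_19
    (s : ℕ) (hs : 1 ≤ s)
    (lam : ℕ → ℚ) (hlam1 : 1 < lam 1)
    (hlam_mono : ∀ i, 1 ≤ i → i < s → lam i < lam (i + 1))
    (M : ℕ → AddSubgroup ℚ)
    (hM : ∀ i, M i = AddSubgroup.closure ({1} ∪ lam '' Set.Icc 1 i))
    (hlamM : ∀ i, 1 ≤ i → i ≤ s → lam i ∉ M (i - 1))
    (kk : ℕ → ℕ)
    (hkk : ∀ i, 1 ≤ i → i ≤ s →
      IsLeast {m : ℕ | 0 < m ∧ (m : ℚ) * lam i ∈ M (i - 1)} (kk i))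
    (e : ℕ → ℕ) (he0 : e 0 = 1)
    (he : ∀ i, 1 ≤ i → i ≤ s → e i = kk i * e (i - 1))
    (gam : ℕ → ℕ → ℚ)
    (hgam1 : ∀ j, 1 ≤ j → j ≤ s → gam j 1 = (e j : ℚ) * lam 1)
    (hgam : ∀ j, 1 ≤ j → j ≤ s → ∀ ℓ, 1 ≤ ℓ → ℓ ≤ j - 1 →
      gam j (ℓ + 1) = (kk ℓ : ℚ) * gam j ℓ - (e j : ℚ) * lam ℓ + (e j : ℚ) * lam (ℓ + 1))
    (c : ℕ → ℂ) (hc : ∀ ℓ, 1 ≤ ℓ → ℓ ≤ s → c ℓ ≠ 0)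
    (φ : ℕ → Polynomial ℂ)
    (hφ0 : ∀ ℓ, 1 ≤ ℓ → ℓ ≤ s → (φ ℓ).coeff 0 = 0)
    (hφsupp : ∀ ℓ, 1 ≤ ℓ → ℓ ≤ s → ∀ a ∈ (φ ℓ).support,
      ∃ m ∈ M ℓ, (a : ℚ) = (e s : ℚ) * m)
    (hφord : ∀ ℓ, 1 ≤ ℓ → ℓ ≤ s → ∀ a ∈ (φ ℓ).support, (e s : ℚ) * lam ℓ < (a : ℚ))
    (hφdeg : ∀ ℓ, 1 ≤ ℓ → ℓ < s → ∀ a ∈ (φ ℓ).support, (a : ℚ) < (e s : ℚ) * lam (ℓ + 1))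
    (E : ℕ → ℕ → ℕ)
    (hE : ∀ i, 1 ≤ i → i ≤ s → ∀ ℓ, 1 ≤ ℓ → ℓ ≤ i → (E i ℓ : ℚ) = (e i : ℚ) * lam ℓ)
    (φs : ℕ → ℕ → Polynomial ℂ)
    (hφs : ∀ i, 1 ≤ i → i ≤ s → ∀ ℓ, 1 ≤ ℓ → ℓ ≤ i →
      (φs i ℓ).comp (Polynomial.X ^ (e s / e i)) = φ ℓ)
    (Y : ℕ → Polynomial ℂ)
    (hY : ∀ i, 1 ≤ i → i ≤ s →
      Y i = ∑ ℓ ∈ Finset.Icc 1 i, (Polynomial.C (c ℓ) * Polynomial.X ^ E i ℓ + φs i ℓ)) :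
    ∀ i, 1 ≤ i → i ≤ s →
      ∀ F : MvPowerSeries (Fin 2) ℂ,
        {d : Fin 2 →₀ ℕ | MvPowerSeries.coeff d F ≠ 0}.Finite → F ≠ 0 →
        psOrdQ (iotaMv (e i) ((Y i : Polynomial ℂ) : PowerSeries ℂ) F) =
          ((gam i i : ℚ) : WithTop ℚ) →
        ∀ a b : MvPowerSeries (Fin 2) ℂ, a ≠ 0 → b ≠ 0 →
        ∀ qa qb : ℚ,
          psOrdQ (iotaMv (e i) ((Y i : Polynomial ℂ) : PowerSeries ℂ) a) = (qa : WithTop ℚ) →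
          psOrdQ (iotaMv (e i) ((Y i : Polynomial ℂ) : PowerSeries ℂ) b) = (qb : WithTop ℚ) →
          qa ∈ AddSubmonoid.closure ({(e i : ℚ)} ∪ gam i '' Set.Icc 1 (i - 1)) →
          qb ∈ AddSubmonoid.closure ({(e i : ℚ)} ∪ gam i '' Set.Icc 1 (i - 1)) →
          ∀ α β : ℕ,
            PowerSeries.order
                (iotaMv (e i) ((Y i : Polynomial ℂ) : PowerSeries ℂ) (a * F ^ α)) =
              PowerSeries.order
                (iotaMv (e i) ((Y i : Polynomial ℂ) : PowerSeries ℂ) (b * F ^ β)) →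
            ∃ m : ℤ, (α : ℤ) - (β : ℤ) = m * (kk i : ℤ) :=
  stmt_19_general s lam M hM hlamM kk hkk e he0 he gam hgam1 hgam c φ hφ0 E hE φs hφs Y hY
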